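/- arXiv:2107.00526 — 6 statements merged into one kernel-verified Lean document; each statement's English description precedes it below -/
import Mathlib

section
/- Let X_1, …, X_n be i.i.d. random variables from a continuous distribution with monotone (non-decreasing) hazard rate. Then for any n' ≤ n, E[max_{i ≤ n'} X_i] / E[max_{i ≤ n} X_i] ≥ H_{n'} / H_n, where H_k denotes the k-th harmonic number. -/
/-!
Choose the rate `lam` of an exponential distribution so that the expected maximum of `n` draws,
`H_n / lam`, equals that of `X`. With `q = max F 0` and `p t = 1 - exp (-lam * t)`, the expected
maximum of `k` draws is `∫ t in Ioi 0, (1 - q t ^ k)`, and likewise with `p`. Since `log (1 - F)`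
is concave and nonnegative at `0`, `(1 - q t) ^ (s / t) ≤ 1 - q s` for `0 < s ≤ t`, so `q` crosses
`p` at most once, from below, say at `c`. On both sides of `c` one has
`n' (p ^ n - q ^ n) ≤ n w ^ (n - n') (p ^ n' - q ^ n')` with `w = p c`; integrating, equality of the
two expected maxima for `n` draws gives `E[max of n'] ≥ H_{n'} / lam`.
-/

open MeasureTheory ProbabilityTheory Real Set Filter Topology

lemma pow_succ_sub_pow_succ_eq_mul_integral (k : ℕ) (x y : ℝ) :
    y ^ (k + 1) - x ^ (k + 1) = (k + 1) * ∫ s in x..y, s ^ k := by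
  rw [integral_pow]
  field_simp

lemma natCast_mul_pow_sub_pow_le {n n' : ℕ} (hn' : 1 ≤ n') (hn : n' ≤ n) {x y w : ℝ}
    (hx : 0 ≤ x) (hw : 0 ≤ w) (hy : x ≤ y ∧ y ≤ w ∨ w ≤ y ∧ y ≤ x) :
    n' * (y ^ n - x ^ n) ≤ n * w ^ (n - n') * (y ^ n' - x ^ n') := by
  obtain ⟨a, rfl⟩ : ∃ a, n' = a + 1 := ⟨n' - 1, by omega⟩
  obtain ⟨b, rfl⟩ : ∃ b, n = a + b + 1 := ⟨n - (a + 1), by omega⟩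
  have hint : ∫ s in x..y, s ^ (a + b) ≤ ∫ s in x..y, w ^ b * s ^ a := by
    have hii : ∀ u v : ℝ, IntervalIntegrable (fun s : ℝ => s ^ (a + b)) volume u v ∧
        IntervalIntegrable (fun s : ℝ => w ^ b * s ^ a) volume u v :=
      fun u v => ⟨(continuous_pow _).intervalIntegrable u v,
        (continuous_const.mul (continuous_pow _)).intervalIntegrable u v⟩
    rcases hy with ⟨hxy, hyw⟩ | ⟨hwy, hyx⟩
    · refine intervalIntegral.integral_mono_on hxy (hii x y).1 (hii x y).2 fun s hs => ?_
      rw [pow_add, mul_comm]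
      have := hx.trans hs.1
      gcongr
      exact hs.2.trans hyw
    · rw [intervalIntegral.integral_symm y, intervalIntegral.integral_symm y, neg_le_neg_iff]
      refine intervalIntegral.integral_mono_on hyx (hii y x).2 (hii y x).1 fun s hs => ?_
      rw [pow_add, mul_comm (s ^ a)]
      have := hw.trans (hwy.trans hs.1)
      gcongr
      exact hwy.trans hs.1
  rw [intervalIntegral.integral_const_mul] at hint
  rw [show a + b + 1 - (a + 1) = b by omega, pow_succ_sub_pow_succ_eq_mul_integral,
    pow_succ_sub_pow_succ_eq_mul_integral]
  push_cast
  have hpos : (0 : ℝ) ≤ (a + 1) * (a + b + 1) := by positivity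
  linear_combination mul_le_mul_of_nonneg_left hint hpos

section Exponential

variable {lam : ℝ}

lemma hasDerivAt_one_sub_exp_pow_div (hlam : 0 < lam) (j : ℕ) (t : ℝ) :
    HasDerivAt (fun t => (1 - exp (-lam * t)) ^ (j + 1) / ((j + 1) * lam))
      ((1 - exp (-lam * t)) ^ j * exp (-lam * t)) t := by
  have h := ((((hasDerivAt_id t).const_mul (-lam)).exp.const_sub 1).fun_pow (j + 1)).div_const
    ((j + 1) * lam)
  refine h.congr_deriv ?_
  simp only [id, Nat.add_sub_cancel]
  push_cast
  field_simp

lemma tendsto_one_sub_exp_pow_div (hlam : 0 < lam) (j : ℕ) :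
    Tendsto (fun t => (1 - exp (-lam * t)) ^ (j + 1) / ((j + 1) * lam)) atTop
      (𝓝 (1 / ((j + 1) * lam))) := by
  have hexp : Tendsto (fun t => exp (-lam * t)) atTop (𝓝 0) :=
    tendsto_exp_atBot.comp (tendsto_id.const_mul_atTop_of_neg (neg_lt_zero.mpr hlam))
  simpa using ((hexp.const_sub 1).pow (j + 1)).div_const ((j + 1) * lam)

lemma one_sub_one_sub_pow_eq_sum (u : ℝ) (k : ℕ) :
    1 - (1 - u) ^ k = ∑ j ∈ Finset.range k, (1 - u) ^ j * u := by
  rw [← Finset.sum_mul, ← geom_sum_mul_neg (1 - u) k, sub_sub_cancel]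

lemma one_sub_exp_neg_mul_pos (hlam : 0 < lam) {t : ℝ} (ht : 0 < t) :
    0 < 1 - exp (-lam * t) := by
  have : exp (-lam * t) < 1 := exp_lt_one_iff.mpr (by nlinarith)
  linarith

lemma monotone_one_sub_exp_neg_mul (hlam : 0 ≤ lam) : Monotone fun t => 1 - exp (-lam * t) :=
  fun _ _ hst => sub_le_sub_left (exp_le_exp.mpr (by nlinarith)) 1

lemma integrableOn_one_sub_exp_pow_mul_exp (hlam : 0 < lam) (j : ℕ) :
    IntegrableOn (fun t => (1 - exp (-lam * t)) ^ j * exp (-lam * t)) (Ioi 0) :=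
  integrableOn_Ioi_deriv_of_nonneg' (fun t _ => hasDerivAt_one_sub_exp_pow_div hlam j t)
    (fun _ ht => by have := one_sub_exp_neg_mul_pos hlam ht; positivity)
    (tendsto_one_sub_exp_pow_div hlam j)

lemma integral_one_sub_exp_pow_mul_exp (hlam : 0 < lam) (j : ℕ) :
    ∫ t in Ioi 0, (1 - exp (-lam * t)) ^ j * exp (-lam * t) = 1 / ((j + 1) * lam) := by
  rw [integral_Ioi_of_hasDerivAt_of_nonneg' (fun t _ => hasDerivAt_one_sub_exp_pow_div hlam j t)
    (fun _ ht => by have := one_sub_exp_neg_mul_pos hlam ht; positivity)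
    (tendsto_one_sub_exp_pow_div hlam j)]
  simp

lemma integrableOn_one_sub_one_sub_exp_pow (hlam : 0 < lam) (k : ℕ) :
    IntegrableOn (fun t => 1 - (1 - exp (-lam * t)) ^ k) (Ioi 0) := by
  simp_rw [one_sub_one_sub_pow_eq_sum]
  exact integrable_finsetSum _ fun j _ => integrableOn_one_sub_exp_pow_mul_exp hlam j

lemma integral_one_sub_one_sub_exp_pow (hlam : 0 < lam) (k : ℕ) :
    ∫ t in Ioi 0, (1 - (1 - exp (-lam * t)) ^ k) = harmonic k / lam := by
  simp_rw [one_sub_one_sub_pow_eq_sum]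
  rw [integral_finsetSum _ fun j _ => integrableOn_one_sub_exp_pow_mul_exp hlam j, harmonic,
    Rat.cast_sum, Finset.sum_div]
  refine Finset.sum_congr rfl fun j _ => ?_
  rw [integral_one_sub_exp_pow_mul_exp hlam j]
  push_cast
  field_simp

end Exponential

section SingleCrossing

variable {p q : ℝ → ℝ}

lemma setIntegral_Ioi_pos {f : ℝ → ℝ} {a : ℝ} (hf : ∀ t ∈ Ioi a, 0 < f t)
    (hfi : IntegrableOn f (Ioi a)) : 0 < ∫ t in Ioi a, f t := by
  have hsupp : Function.support f ∩ Ioi a = Ioi a :=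
    inter_eq_right.mpr fun t ht => Function.mem_support.mpr (hf t ht).ne'
  rw [setIntegral_pos_iff_support_of_nonneg_ae
    ((ae_restrict_iff' measurableSet_Ioi).mpr (ae_of_all _ fun t ht => (hf t ht).le)) hfi,
    hsupp, Real.volume_Ioi]
  exact ENNReal.zero_lt_top

lemma exists_crossing_point (hcross : ∀ s t, 0 < s → s < t → p s < q s → p t < q t)
    (hC : ∃ u, 0 < u ∧ p u < q u) :
    ∃ c, 0 ≤ c ∧ (∀ t, 0 < t → t < c → q t ≤ p t) ∧ ∀ t, c < t → p t < q t := by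
  set C := {u | 0 < u ∧ p u < q u}
  have hbdd : BddBelow C := ⟨0, fun u hu => hu.1.le⟩
  refine ⟨sInf C, le_csInf hC fun u hu => hu.1.le, fun t ht htc => ?_, fun t htc => ?_⟩
  · by_contra! hlt
    exact (csInf_le hbdd ⟨ht, hlt⟩).not_gt htc
  · obtain ⟨s, ⟨hs, hps⟩, hst⟩ := exists_lt_of_csInf_lt hC htc
    exact hcross s t hs hst hps

theorem setIntegral_one_sub_pow_le_of_crossing {n n' : ℕ} (hn' : 1 ≤ n') (hn : n' ≤ n)
    (hp : ∀ t, 0 < t → 0 < p t) (hq : ∀ t, 0 ≤ q t) (hpmono : Monotone p)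
    (hcross : ∀ s t, 0 < s → s < t → p s < q s → p t < q t)
    (hpn : IntegrableOn (fun t => 1 - p t ^ n) (Ioi 0))
    (hqn : IntegrableOn (fun t => 1 - q t ^ n) (Ioi 0))
    (hpn' : IntegrableOn (fun t => 1 - p t ^ n') (Ioi 0))
    (hqn' : IntegrableOn (fun t => 1 - q t ^ n') (Ioi 0))
    (heq : ∫ t in Ioi 0, (1 - q t ^ n) = ∫ t in Ioi 0, (1 - p t ^ n)) :
    ∫ t in Ioi 0, (1 - p t ^ n') ≤ ∫ t in Ioi 0, (1 - q t ^ n') := by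
  by_cases hC : ∃ u, 0 < u ∧ p u < q u
  swap
  · push Not at hC
    refine setIntegral_mono_on hpn' hqn' measurableSet_Ioi fun t ht => ?_
    linarith [pow_le_pow_left₀ (hq t) (hC t ht) n']
  obtain ⟨c, hc0, hbelow, habove⟩ := exists_crossing_point hcross hC
  have hc : 0 < c := by
    refine hc0.lt_of_ne fun hc => (setIntegral_Ioi_pos (fun t ht => ?_) (hpn.sub hqn)).ne' ?_
    · have := pow_lt_pow_left₀ (habove t (hc ▸ ht)) (hp t ht).le (by omega : n ≠ 0)
      simp only [Pi.sub_apply]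
      linarith
    · simp only [Pi.sub_apply]
      rw [integral_sub hpn hqn, heq, sub_self]
  have hw : 0 < n * p c ^ (n - n') := by
    have := hp c hc
    have : 0 < n := by omega
    positivity
  have hpointwise : ∀ᵐ t ∂volume.restrict (Ioi 0),
      n' * ((1 - q t ^ n) - (1 - p t ^ n)) ≤
        n * p c ^ (n - n') * ((1 - q t ^ n') - (1 - p t ^ n')) := by
    filter_upwards [ae_restrict_mem measurableSet_Ioi, ae_restrict_of_ae (volume.ae_ne c)]
      with t ht htc
    have key := natCast_mul_pow_sub_pow_le hn' hn (hq t) (hp c hc).le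
      (y := p t) <| htc.lt_or_gt.imp
        (fun h => ⟨hbelow t ht h, hpmono h.le⟩) (fun h => ⟨hpmono h.le, (habove t h).le⟩)
    linarith
  have hintegrated := integral_mono_ae ((hqn.sub hpn).const_mul _)
    ((hqn'.sub hpn').const_mul _) hpointwise
  simp only [Pi.sub_apply] at hintegrated
  rw [integral_const_mul, integral_const_mul, integral_sub hqn hpn, integral_sub hqn' hpn', heq,
    sub_self, mul_zero] at hintegrated
  have := nonneg_of_mul_nonneg_right hintegrated hw
  linarith

end SingleCrossing

section MonotoneHazardRate

variable {F : ℝ → ℝ}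

lemma one_sub_max_rpow_le (hMHR : ConcaveOn ℝ {x | F x < 1} fun x => log (1 - F x))
    (hF0 : F 0 ≤ 0) (hF1 : ∀ t, F t ≤ 1) {s t : ℝ} (hs : 0 < s) (hst : s ≤ t) :
    (1 - max (F t) 0) ^ (s / t) ≤ 1 - max (F s) 0 := by
  have ht : 0 < t := hs.trans_le hst
  have hθ : 0 < s / t := div_pos hs ht
  have hθ1 : s / t ≤ 1 := (div_le_one ht).mpr hst
  have hmin : ∀ u, 1 - max (F u) 0 = min (1 - F u) 1 := fun u => by
    rw [← min_sub_sub_left, sub_zero]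
  rcases (hF1 t).lt_or_eq with hFt | hFt
  swap
  · rw [hmin, hmin, hFt, sub_self, min_eq_left zero_le_one, zero_rpow hθ.ne']
    exact le_min (sub_nonneg.mpr (hF1 s)) zero_le_one
  have h0 : (0 : ℝ) ∈ {x | F x < 1} := show F 0 < 1 by linarith
  have hFs : s ∈ {x | F x < 1} :=
    (convex_iff_ordConnected.mp hMHR.1).out h0 hFt ⟨hs.le, hst⟩
  have hconc := hMHR.2 h0 hFt (sub_nonneg.mpr hθ1) hθ.le (sub_add_cancel 1 (s / t))
  simp only [smul_eq_mul, mul_zero, zero_add, div_mul_cancel₀ s ht.ne'] at hconc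
  have hlog0 : 0 ≤ (1 - s / t) * log (1 - F 0) :=
    mul_nonneg (sub_nonneg.mpr hθ1) (log_nonneg (by linarith))
  have hSt : 0 ≤ min (1 - F t) 1 := le_min (sub_nonneg.mpr (hF1 t)) zero_le_one
  rw [hmin, hmin]
  refine le_min ?_ (rpow_le_one hSt (min_le_right _ _) hθ.le)
  calc min (1 - F t) 1 ^ (s / t) ≤ (1 - F t) ^ (s / t) :=
        rpow_le_rpow hSt (min_le_left _ _) hθ.le
    _ = exp (s / t * log (1 - F t)) := by rw [rpow_def_of_pos (by linarith), mul_comm]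
    _ ≤ exp (log (1 - F s)) := exp_le_exp.mpr (by linarith)
    _ = 1 - F s := exp_log (by linarith [show F s < 1 from hFs])

lemma one_sub_exp_lt_max_of_lt (hMHR : ConcaveOn ℝ {x | F x < 1} fun x => log (1 - F x))
    (hF0 : F 0 ≤ 0) (hF1 : ∀ t, F t ≤ 1) (lam : ℝ) {s t : ℝ} (hs : 0 < s) (hst : s < t)
    (h : 1 - exp (-lam * s) < max (F s) 0) : 1 - exp (-lam * t) < max (F t) 0 := by
  by_contra! hle
  have ht : 0 < t := hs.trans hst
  have : exp (-lam * s) ≤ (1 - max (F t) 0) ^ (s / t) :=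
    calc exp (-lam * s) = exp (-lam * t) ^ (s / t) := by
          rw [← exp_mul]
          field_simp
      _ ≤ (1 - max (F t) 0) ^ (s / t) :=
          rpow_le_rpow (exp_pos _).le (by linarith) (div_pos hs ht).le
  linarith [one_sub_max_rpow_le hMHR hF0 hF1 hs hst.le]

end MonotoneHazardRate

section TailFormula

variable {Ω : Type*} [MeasurableSpace Ω] {μ : Measure Ω}

lemma le_one_of_measure_eq_ofReal [IsProbabilityMeasure μ] {s : Set Ω} {a : ℝ}
    (h : μ s = ENNReal.ofReal a) : a ≤ 1 := by
  have := prob_le_one (μ := μ) (s := s)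
  rwa [h, ENNReal.ofReal_le_one] at this

lemma nonpos_at_zero_of_ae_nonneg {Y : Ω → ℝ} {F : ℝ → ℝ} (hY : 0 ≤ᵐ[μ] Y)
    (hF : ∀ t, μ {ω | Y ω ≤ t} = ENNReal.ofReal (F t)) (hFc : ContinuousWithinAt F (Iio 0) 0) :
    F 0 ≤ 0 := by
  refine le_of_tendsto hFc (eventually_nhdsWithin_of_forall fun u (hu : u < 0) => ?_)
  have : μ {ω | Y ω ≤ u} = 0 :=
    measure_mono_null (fun ω hω => not_le.mpr (lt_of_le_of_lt hω hu)) (ae_iff.mp hY)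
  rwa [hF, ENNReal.ofReal_eq_zero] at this

lemma MeasureTheory.Integrable.integrableOn_measureReal_lt {f : Ω → ℝ} (hf : Integrable f μ)
    (hf0 : 0 ≤ᵐ[μ] f) : IntegrableOn (fun t => μ.real {ω | t < f ω}) (Ioi 0) := by
  refine integrable_toReal_of_lintegral_ne_top ?_ ?_
  · have : Antitone fun t : ℝ => μ {ω | t < f ω} := fun _ _ hst => measure_mono fun _ h =>
      hst.trans_lt h
    exact this.measurable.aemeasurable
  · rw [← lintegral_eq_lintegral_meas_lt μ hf0 hf.aemeasurable]
    exact hf.lintegral_lt_top.ne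

lemma integrableOn_one_sub_and_integral_eq [IsProbabilityMeasure μ] {Y : Ω → ℝ} {G : ℝ → ℝ}
    (hY : Integrable Y μ) (hY0 : 0 ≤ᵐ[μ] Y) (hG0 : ∀ t, 0 ≤ G t)
    (hG : ∀ t, μ {ω | Y ω ≤ t} = ENNReal.ofReal (G t)) :
    IntegrableOn (fun t => 1 - G t) (Ioi 0) ∧ ∫ ω, Y ω ∂μ = ∫ t in Ioi 0, (1 - G t) := by
  have htail : (fun t => μ.real {ω | t < Y ω}) = fun t => 1 - G t := by
    ext t
    have hcompl : {ω | t < Y ω} = {ω | Y ω ≤ t}ᶜ := by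
      ext
      simp
    rw [hcompl, probReal_compl_eq_one_sub₀ (s := {ω | Y ω ≤ t})
      (hY.aemeasurable.nullMeasurable measurableSet_Iic),
      measureReal_def, hG, ENNReal.toReal_ofReal (hG0 t)]
  rw [← htail]
  exact ⟨hY.integrableOn_measureReal_lt hY0, hY.integral_eq_integral_meas_lt hY0⟩

end TailFormula

section Maximum

variable {Ω : Type*} [MeasurableSpace Ω] {μ : Measure Ω} {X : ℕ → Ω → ℝ} {F : ℝ → ℝ} {k m : ℕ}

lemma measure_sup'_range_le (hindep : iIndepFun X μ)
    (hCDF : ∀ i t, μ {ω | X i ω ≤ t} = ENNReal.ofReal (F t))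
    (hk : (Finset.range k).Nonempty) (t : ℝ) :
    μ {ω | (Finset.range k).sup' hk (fun i => X i ω) ≤ t} = ENNReal.ofReal (max (F t) 0 ^ k) := by
  have hset : {ω | (Finset.range k).sup' hk (fun i => X i ω) ≤ t} =
      ⋂ i ∈ Finset.range k, {ω | X i ω ≤ t} := by
    ext ω
    simp [Finset.sup'_le_iff]
  rw [hset, hindep.meas_biInter (s := fun i => {ω | X i ω ≤ t})
    fun i _ => ⟨Iic t, measurableSet_Iic, rfl⟩]
  simp_rw [hCDF]
  rw [Finset.prod_const, Finset.card_range, ENNReal.ofReal_pow (le_max_right _ _),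
    ENNReal.ofReal_max, ENNReal.ofReal_zero, max_eq_left (zero_le (α := ENNReal))]

lemma ae_nonneg_sup'_range (hnonneg : ∀ i, ∀ᵐ ω ∂μ, 0 ≤ X i ω)
    (hk : (Finset.range k).Nonempty) :
    0 ≤ᵐ[μ] fun ω => (Finset.range k).sup' hk (fun i => X i ω) :=
  (hnonneg 0).mono fun ω h => h.trans (Finset.le_sup' (fun i => X i ω)
    (Finset.mem_range.mpr (Nat.pos_of_ne_zero (Finset.nonempty_range_iff.mp hk))))

lemma integrable_sup'_range_of_le (hmeas : ∀ i, Measurable (X i))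
    (hnonneg : ∀ i, ∀ᵐ ω ∂μ, 0 ≤ X i ω) (hk : (Finset.range k).Nonempty)
    (hm : (Finset.range m).Nonempty) (hkm : k ≤ m)
    (hint : Integrable (fun ω => (Finset.range m).sup' hm (fun i => X i ω)) μ) :
    Integrable (fun ω => (Finset.range k).sup' hk (fun i => X i ω)) μ := by
  have hmeas' : Measurable fun ω => (Finset.range k).sup' hk (fun i => X i ω) := by
    convert! Finset.measurable_sup' hk fun i _ => hmeas i using 1
    ext ω
    simp
  refine hint.mono hmeas'.aestronglyMeasurable ?_
  filter_upwards [ae_nonneg_sup'_range hnonneg hk] with ω h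
  rw [norm_of_nonneg h, norm_of_nonneg (h.trans (Finset.sup'_mono _
    (Finset.range_subset_range.mpr hkm) hk))]
  exact Finset.sup'_mono _ (Finset.range_subset_range.mpr hkm) hk

lemma integral_sup'_range_eq [IsProbabilityMeasure μ] (hindep : iIndepFun X μ)
    (hCDF : ∀ i t, μ {ω | X i ω ≤ t} = ENNReal.ofReal (F t))
    (hnonneg : ∀ i, ∀ᵐ ω ∂μ, 0 ≤ X i ω) (hk : (Finset.range k).Nonempty)
    (hint : Integrable (fun ω => (Finset.range k).sup' hk (fun i => X i ω)) μ) :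
    IntegrableOn (fun t => 1 - max (F t) 0 ^ k) (Ioi 0) ∧
      ∫ ω, (Finset.range k).sup' hk (fun i => X i ω) ∂μ = ∫ t in Ioi 0, (1 - max (F t) 0 ^ k) :=
  integrableOn_one_sub_and_integral_eq hint (ae_nonneg_sup'_range hnonneg hk)
    (fun _ => pow_nonneg (le_max_right _ _) k) (measure_sup'_range_le hindep hCDF hk)

end Maximum

/-- For i.i.d. draws from a continuous MHR distribution (log(1-F) concave where F < 1),
`E[max of n'] / E[max of n] ≥ H_{n'} / H_n` for `n' ≤ n`. -/
theorem stmt3 {Ω : Type*} [MeasurableSpace Ω] (μ : Measure Ω) [IsProbabilityMeasure μ]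
    (n n' : ℕ) (hn' : 1 ≤ n') (hn : n' ≤ n)
    (F : ℝ → ℝ) (X : ℕ → Ω → ℝ) (hmeas : ∀ i, Measurable (X i))
    (hindep : iIndepFun X μ)
    (hCDF : ∀ i, ∀ t : ℝ, μ {ω | X i ω ≤ t} = ENNReal.ofReal (F t))
    (hFcont : Continuous F)
    (hnonneg : ∀ i, ∀ᵐ ω ∂μ, 0 ≤ X i ω)
    (hMHR : ConcaveOn ℝ {x : ℝ | F x < 1} (fun x => Real.log (1 - F x)))
    (hint : Integrable
      (fun ω => (Finset.range n).sup' (Finset.nonempty_range_iff.mpr (by omega))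
        (fun i => X i ω)) μ)
    (hpos : 0 < ∫ ω, (Finset.range n).sup' (Finset.nonempty_range_iff.mpr (by omega))
        (fun i => X i ω) ∂μ) :
    (∫ ω, (Finset.range n').sup' (Finset.nonempty_range_iff.mpr (by omega))
        (fun i => X i ω) ∂μ) /
      (∫ ω, (Finset.range n).sup' (Finset.nonempty_range_iff.mpr (by omega))
        (fun i => X i ω) ∂μ)
      ≥ (harmonic n' : ℝ) / (harmonic n : ℝ) := by
  have hF1 : ∀ t, F t ≤ 1 := fun t => le_one_of_measure_eq_ofReal (hCDF 0 t)
  have hF0 : F 0 ≤ 0 :=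
    nonpos_at_zero_of_ae_nonneg (hnonneg 0) (hCDF 0) hFcont.continuousWithinAt
  obtain ⟨hqn, hEn⟩ := integral_sup'_range_eq hindep hCDF hnonneg _ hint
  obtain ⟨hqn', hEn'⟩ := integral_sup'_range_eq hindep hCDF hnonneg _
    (integrable_sup'_range_of_le hmeas hnonneg _ _ hn hint)
  have hHn : (0 : ℝ) < harmonic n := by exact_mod_cast harmonic_pos (by omega)
  set lam := (harmonic n : ℝ) / ∫ ω, (Finset.range n).sup'
    (Finset.nonempty_range_iff.mpr (by omega)) (fun i => X i ω) ∂μ with hlam_def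
  have hlam : 0 < lam := div_pos hHn hpos
  have hcmp := setIntegral_one_sub_pow_le_of_crossing hn' hn
    (fun t ht => one_sub_exp_neg_mul_pos hlam ht) (fun t => le_max_right (F t) 0)
    (monotone_one_sub_exp_neg_mul hlam.le)
    (fun s t hs hst => one_sub_exp_lt_max_of_lt hMHR hF0 hF1 lam hs hst)
    (integrableOn_one_sub_one_sub_exp_pow hlam n) hqn
    (integrableOn_one_sub_one_sub_exp_pow hlam n') hqn'
    (by rw [← hEn, integral_one_sub_one_sub_exp_pow hlam, hlam_def]; field_simp)
  rw [integral_one_sub_one_sub_exp_pow hlam, ← hEn', hlam_def, div_div_eq_mul_div,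
    div_le_iff₀ hHn] at hcmp
  rw [ge_iff_le, div_le_div_iff₀ hHn hpos]
  linarith
end

section
/- Let X be a random variable with a continuous MHR distribution. Then P(X ≤ E[X]) ≤ 1 − 1/e. -/
open MeasureTheory Real Set

/-! The cumulative hazard `H = -log (1 - F)` is convex on `{F < 1}`. If `F m > 1 - 1/e` at the
mean `m`, pick `p ≤ m` with `F p < 1` and `H p > 1`. The supporting line of `H` at `p`, of slope
`k`, lies below `H 0 ≤ 0`, so `k p ≥ H p`; and it bounds the survival function by
`exp (-(H p + k (t - p)))`. Integrating the minimum of `1` and this bound gives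
`m ≤ p - (H p - 1) / k < p`, a contradiction. -/

namespace ConvexOn

variable {S : Set ℝ} {f : ℝ → ℝ} {x y : ℝ}

theorem add_rightDeriv_mul_sub_le (hf : ConvexOn ℝ S f) (hx : x ∈ interior S) (hy : y ∈ S) :
    f x + derivWithin f (Ioi x) x * (y - x) ≤ f y := by
  rcases lt_trichotomy y x with hyx | rfl | hxy
  · have h := (hf.slope_le_leftDeriv_of_mem_interior hy hx hyx).trans
      (hf.leftDeriv_le_rightDeriv_of_mem_interior hx)
    rw [slope_def_field, div_le_iff₀ (sub_pos.2 hyx)] at h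
    linarith
  · simp
  · have h := hf.rightDeriv_le_slope_of_mem_interior hx hy hxy
    rw [slope_def_field, le_div_iff₀ (sub_pos.2 hxy)] at h
    linarith

end ConvexOn

theorem setIntegral_Ioi_zero_le_of_le_exp {S : ℝ → ℝ} {a k : ℝ} (ha : 0 ≤ a) (hk : 0 < k)
    (hS0 : ∀ t, 0 < t → 0 ≤ S t) (hS1 : ∀ t, 0 < t → S t ≤ 1)
    (hSexp : ∀ t, 0 < t → S t ≤ exp (-(k * (t - a)))) :
    ∫ t in Ioi 0, S t ≤ a + k⁻¹ := by
  set e : ℝ → ℝ := fun t => exp (-(k * (t - a)))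
  have he : e = fun t => exp (k * a) * exp (-k * t) := funext fun t => by
    simp only [e, ← exp_add]; ring_nf
  have he_int : ∀ b, IntegrableOn e (Ioi b) := fun b => by
    rw [he]; exact (integrableOn_exp_mul_Ioi (neg_neg_of_pos hk) b).const_mul _
  set g : ℝ → ℝ := fun t => min 1 (e t)
  have hg_int : ∀ b, IntegrableOn g (Ioi b) := fun b =>
    (he_int b).mono' (by fun_prop) (ae_of_all _ fun t => by
      rw [norm_of_nonneg (le_min zero_le_one (exp_pos _).le)]; exact min_le_right _ _)
  calc ∫ t in Ioi 0, S t ≤ ∫ t in Ioi 0, g t :=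
        integral_mono_of_nonneg ((ae_restrict_mem measurableSet_Ioi).mono hS0)
          (hg_int 0) ((ae_restrict_mem measurableSet_Ioi).mono fun t ht =>
            le_min (hS1 t ht) (hSexp t ht))
    _ = (∫ t in Ioc 0 a, g t) + ∫ t in Ioi a, g t := by
        rw [← setIntegral_union Ioc_disjoint_Ioi_same measurableSet_Ioi
          ((hg_int 0).mono_set Ioc_subset_Ioi_self) (hg_int a), Ioc_union_Ioi_eq_Ioi ha]
    _ ≤ (∫ _ in Ioc 0 a, (1 : ℝ)) + ∫ t in Ioi a, e t :=
        add_le_add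
          (setIntegral_mono_on ((hg_int 0).mono_set Ioc_subset_Ioi_self)
            (integrableOn_const measure_Ioc_lt_top.ne) measurableSet_Ioc
            fun _ _ => min_le_left _ _)
          (setIntegral_mono_on (hg_int a) (he_int a) measurableSet_Ioi
            fun _ _ => min_le_right _ _)
    _ = a + k⁻¹ := by
        rw [he, integral_const_mul, integral_exp_mul_Ioi (neg_neg_of_pos hk), neg_div_neg_eq,
          mul_div_assoc', ← exp_add]
        simp [ha]

noncomputable def cumHazard (F : ℝ → ℝ) (t : ℝ) : ℝ := -log (1 - F t)

theorem one_sub_le_exp_of_convexOn_cumHazard {F : ℝ → ℝ} {p : ℝ}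
    (hH : ConvexOn ℝ {x | F x < 1} (cumHazard F)) (hp : p ∈ interior {x | F x < 1}) (t : ℝ) :
    1 - F t ≤ exp (-(cumHazard F p + derivWithin (cumHazard F) (Ioi p) p * (t - p))) := by
  by_cases ht : F t < 1
  · calc 1 - F t = exp (-cumHazard F t) := by rw [cumHazard, neg_neg, exp_log (sub_pos.2 ht)]
      _ ≤ _ := exp_le_exp.2 (neg_le_neg (hH.add_rightDeriv_mul_sub_le hp ht))
  · exact (sub_nonpos.2 (not_lt.1 ht)).trans (exp_pos _).le

section Distribution

variable {Ω : Type*} [MeasurableSpace Ω] {μ : Measure Ω} {X : Ω → ℝ} {F : ℝ → ℝ}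

theorem integral_le_of_measureReal_lt_le_exp [IsProbabilityMeasure μ] (hint : Integrable X μ)
    (hnonneg : 0 ≤ᵐ[μ] X) {a k : ℝ} (ha : 0 ≤ a) (hk : 0 < k)
    (htail : ∀ t, 0 < t → μ.real {ω | t < X ω} ≤ exp (-(k * (t - a)))) :
    ∫ ω, X ω ∂μ ≤ a + k⁻¹ := by
  rw [hint.integral_eq_integral_meas_lt hnonneg]
  exact setIntegral_Ioi_zero_le_of_le_exp ha hk (fun _ _ => measureReal_nonneg)
    (fun _ _ => measureReal_le_one) htail

variable (hCDF : ∀ t, μ {ω | X ω ≤ t} = ENNReal.ofReal (F t))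
include hCDF

theorem measureReal_lt_le_one_sub_cdf [IsProbabilityMeasure μ] (hX : Measurable X) (t : ℝ) :
    μ.real {ω | t < X ω} ≤ 1 - F t := by
  have hcompl : {ω | t < X ω} = {ω | X ω ≤ t}ᶜ := by ext; simp
  rw [hcompl, probReal_compl_eq_one_sub (measurableSet_le hX measurable_const), measureReal_def,
    hCDF, ENNReal.toReal_ofReal']
  exact sub_le_sub_left (le_max_left _ _) 1

theorem cdf_zero_nonpos (hF : Continuous F) (hX : ∀ᵐ ω ∂μ, 0 ≤ X ω) : F 0 ≤ 0 := by
  have hneg : ∀ t < 0, F t ≤ 0 := fun t ht => by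
    have : μ {ω | X ω ≤ t} = 0 :=
      measure_mono_null (fun ω hω => by simp only [mem_ofPred_eq] at *; linarith) (ae_iff.1 hX)
    rwa [hCDF, ENNReal.ofReal_eq_zero] at this
  exact le_of_tendsto (hF.continuousAt.tendsto.mono_left nhdsWithin_le_nhds)
    (eventually_nhdsWithin_of_forall (s := Iio 0) hneg)

theorem integral_lt_of_one_lt_cumHazard [IsProbabilityMeasure μ] (hX : Measurable X)
    (hnonneg : ∀ᵐ ω ∂μ, 0 ≤ X ω) (hint : Integrable X μ) (hF0 : F 0 ≤ 0)
    (hH : ConvexOn ℝ {x | F x < 1} (cumHazard F)) {p : ℝ} (hp : p ∈ interior {x | F x < 1})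
    (hp0 : 0 ≤ p) (hc : 1 < cumHazard F p) :
    ∫ ω, X ω ∂μ < p := by
  set c := cumHazard F p
  set k := derivWithin (cumHazard F) (Ioi p) p
  have hkp : c ≤ k * p := by
    have := hH.add_rightDeriv_mul_sub_le hp (show F 0 < 1 by linarith)
    have : cumHazard F 0 ≤ 0 := neg_nonpos.2 (log_nonneg (by linarith))
    linarith
  have hk : 0 < k := pos_of_mul_pos_left (by linarith) hp0
  have hmean : ∫ ω, X ω ∂μ ≤ (p - c / k) + k⁻¹ :=
    integral_le_of_measureReal_lt_le_exp hint hnonneg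
      (sub_nonneg.2 ((div_le_iff₀ hk).2 (by linarith))) hk fun t _ =>
      (measureReal_lt_le_one_sub_cdf hCDF hX t).trans
        ((one_sub_le_exp_of_convexOn_cumHazard hH hp t).trans_eq (by congr 1; field_simp; ring))
  have : p - c / k + k⁻¹ = p - (c - 1) / k := by field_simp; ring
  linarith [div_pos (sub_pos.2 hc) hk]

end Distribution

/-- Barlow–Marshall: for `X` with a continuous nonnegative MHR distribution,
`P(X ≤ E[X]) ≤ 1 - 1/e`. -/
theorem stmt8 {Ω : Type*} [MeasurableSpace Ω] (μ : Measure Ω) [IsProbabilityMeasure μ]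
    (F : ℝ → ℝ) (hFcont : Continuous F)
    (hMHR : ConcaveOn ℝ {x : ℝ | F x < 1} (fun x => Real.log (1 - F x)))
    (X : Ω → ℝ) (hmeas : Measurable X)
    (hCDF : ∀ t : ℝ, μ {ω | X ω ≤ t} = ENNReal.ofReal (F t))
    (hnonneg : ∀ᵐ ω ∂μ, 0 ≤ X ω)
    (hint : Integrable X μ) :
    μ {ω | X ω ≤ ∫ ω', X ω' ∂μ} ≤ ENNReal.ofReal (1 - (Real.exp 1)⁻¹) := by
  set m := ∫ ω', X ω' ∂μ
  rw [hCDF m]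
  refine ENNReal.ofReal_le_ofReal (not_lt.1 fun hFm => ?_)
  have he : 0 < (exp 1)⁻¹ := inv_pos.2 (exp_pos 1)
  have he1 : (exp 1)⁻¹ < 1 := inv_lt_one_of_one_lt₀ (one_lt_exp_iff.2 one_pos)
  have hF0 : F 0 ≤ 0 := cdf_zero_nonpos hCDF hFcont hnonneg
  -- the level is kept below `1` so that `p` is interior to `{F < 1}`
  obtain ⟨p, ⟨hp0, hpm⟩, hFp⟩ : ∃ p ∈ Icc 0 m, F p = min (F m) (1 - (exp 1)⁻¹ / 2) :=
    intermediate_value_Icc (integral_nonneg_of_ae hnonneg) hFcont.continuousOn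
      ⟨hF0.trans (le_min (by linarith) (by linarith)), min_le_left _ _⟩
  have hFp_gt : 1 - (exp 1)⁻¹ < F p := hFp ▸ lt_min hFm (by linarith)
  have hFp_lt : F p < 1 := hFp ▸ (min_le_right _ _).trans_lt (by linarith)
  have hpI : p ∈ interior {x | F x < 1} := by
    rw [(isOpen_lt hFcont continuous_const).interior_eq]; exact hFp_lt
  have hc : 1 < cumHazard F p := by
    have : log (1 - F p) < -1 := by rw [log_lt_iff_lt_exp (by linarith), exp_neg]; linarith
    exact lt_neg_of_lt_neg this
  have := integral_lt_of_one_lt_cumHazard hCDF hmeas hnonneg hint hF0 hMHR.neg hpI hp0 hc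
  linarith
end

section
/- Define p^(n) = 0 and p^(i) = E[max{v, p^(i+1)}] for i < n, where v ∼ Exp(1). Then for all 2 ≤ k ≤ n, p^(n−k) ≤ H_k − 1/8. -/
/-!
Reading the recursion backwards from `p^(n) = 0` and using `E[max{v, c}] = c + e^{-c}` for
`c ≥ 0`, the value `p^(n-k)` is the `k`-th iterate of `f(c) = c + e^{-c}` at `0`. The map `f` is
monotone on `[0, ∞)`, so an upper bound `b` on `p^(n-k)` gives `p^(n-k-1) ≤ b + e^{-b}`. For
`b = H_k - 1/8` this is at most `H_{k+1} - 1/8`, because `H_k - log (k + 1)` increases in `k` and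
already exceeds `1/8` at `k = 2`, whence `e^{-b} ≤ 1/(k+1)`. The induction starts from
`p^(n-2) = 1 + e^{-1} ≤ 11/8`.
-/

open MeasureTheory Real ProbabilityTheory

open Set Filter Topology

lemma integral_expMeasure_eq_setIntegral_Ioi {r : ℝ} (hr : 0 ≤ r) (g : ℝ → ℝ) :
    ∫ x, g x ∂expMeasure r = ∫ x in Ioi 0, r * exp (-(r * x)) * g x := by
  have hdens : ∀ x, (exponentialPDF r x).toReal • g x
      = (Ici 0).indicator (fun x => r * exp (-(r * x)) * g x) x := by
    intro x
    rcases le_or_gt 0 x with hx | hx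
    · rw [exponentialPDF_of_nonneg hx, ENNReal.toReal_ofReal (by positivity),
        indicator_of_mem (mem_Ici.mpr hx), smul_eq_mul]
    · rw [exponentialPDF_of_neg hx, indicator_of_notMem (notMem_Ici.mpr hx)]
      simp
  rw [show expMeasure r = volume.withDensity (exponentialPDF r) from rfl,
    integral_withDensity_eq_integral_toReal_smul
      (show Measurable (exponentialPDF r) from (measurable_exponentialPDFReal r).ennreal_ofReal)
      (ae_of_all _ fun _ => ENNReal.ofReal_lt_top)]
  simp_rw [hdens]
  rw [integral_indicator measurableSet_Ici, integral_Ici_eq_integral_Ioi]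

lemma hasDerivAt_neg_add_one_mul_exp_neg (x : ℝ) :
    HasDerivAt (fun y => -(y + 1) * exp (-y)) (x * exp (-x)) x := by
  have h : HasDerivAt (fun y => -(y + 1) * exp (-y)) (-1 * exp (-x) + -(x + 1) * (exp (-x) * -1))
      x := ((hasDerivAt_id' x).add_const 1).neg.mul (hasDerivAt_neg' x).exp
  convert h using 1
  ring

lemma tendsto_neg_add_one_mul_exp_neg_atTop :
    Tendsto (fun y => -(y + 1) * exp (-y)) atTop (𝓝 0) := by
  have := ((tendsto_pow_mul_exp_neg_atTop_nhds_zero 1).add tendsto_exp_neg_atTop_nhds_zero).neg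
  simp only [pow_one, add_zero, neg_zero] at this
  exact this.congr fun y => by ring

lemma integrableOn_mul_exp_neg_Ioi {c : ℝ} (hc : 0 ≤ c) :
    IntegrableOn (fun x => x * exp (-x)) (Ioi c) :=
  integrableOn_Ioi_deriv_of_nonneg' (fun x _ ↦ hasDerivAt_neg_add_one_mul_exp_neg x)
    (fun _ hx ↦ mul_nonneg (hc.trans hx.le) (exp_nonneg _)) tendsto_neg_add_one_mul_exp_neg_atTop

lemma integral_mul_exp_neg_Ioi {c : ℝ} (hc : 0 ≤ c) :
    ∫ x in Ioi c, x * exp (-x) = (c + 1) * exp (-c) := by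
  rw [integral_Ioi_of_hasDerivAt_of_nonneg' (fun x _ ↦ hasDerivAt_neg_add_one_mul_exp_neg x)
    (fun _ hx ↦ mul_nonneg (hc.trans hx.le) (exp_nonneg _)) tendsto_neg_add_one_mul_exp_neg_atTop]
  ring

lemma integral_max_expMeasure_one {c : ℝ} (hc : 0 ≤ c) :
    ∫ x, max x c ∂expMeasure 1 = c + exp (-c) := by
  simp only [integral_expMeasure_eq_setIntegral_Ioi zero_le_one, one_mul]
  have hbelow : EqOn (fun x => exp (-x) * max x c) (fun x => c * exp (-x)) (Ioc 0 c) :=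
    fun x hx => by simp only [max_eq_right hx.2, mul_comm]
  have habove : EqOn (fun x => exp (-x) * max x c) (fun x => x * exp (-x)) (Ioi c) :=
    fun x hx => by simp only [max_eq_left hx.out.le, mul_comm]
  have hint_below : IntegrableOn (fun x => exp (-x) * max x c) (Ioc 0 c) :=
    (by fun_prop : Continuous fun x => exp (-x) * max x c).integrableOn_Ioc
  have hint_above : IntegrableOn (fun x => exp (-x) * max x c) (Ioi c) :=
    (integrableOn_mul_exp_neg_Ioi hc).congr_fun habove.symm measurableSet_Ioi
  rw [← Ioc_union_Ioi_eq_Ioi hc, setIntegral_union (Ioc_disjoint_Ioi le_rfl) measurableSet_Ioi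
      hint_below hint_above, setIntegral_congr_fun measurableSet_Ioc hbelow,
    setIntegral_congr_fun measurableSet_Ioi habove, integral_mul_exp_neg_Ioi hc,
    integral_const_mul, ← intervalIntegral.integral_of_le hc,
    intervalIntegral.integral_comp_neg fun x => exp x, integral_exp, neg_zero, exp_zero]
  ring

lemma monotoneOn_add_exp_neg : MonotoneOn (fun c : ℝ => c + exp (-c)) (Ici 0) := by
  intro a ha b _ hab
  have hexp_a : exp (-a) ≤ 1 := exp_le_one_iff.mpr (neg_nonpos.mpr ha)
  have hexp_b : exp (-b) = exp (-a) * exp (a - b) := by rw [← exp_add]; ring_nf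
  nlinarith [add_one_le_exp (a - b), exp_pos (-a)]

lemma log_three_lt : log 3 < 11 / 8 := by
  have hsplit : log 3 = log 2 + log (3 / 2) := by rw [← log_mul] <;> norm_num
  have := log_le_sub_one_of_pos (by norm_num : (0 : ℝ) < 3 / 2)
  linarith [log_two_lt_d9]

lemma log_add_one_add_one_div_eight_le_harmonic {k : ℕ} (hk : 2 ≤ k) :
    log (k + 1) + 1 / 8 ≤ harmonic k := by
  have hmono := strictMono_eulerMascheroniSeq.monotone hk
  have hH2 : (harmonic 2 : ℝ) = 3 / 2 := by norm_num [harmonic_succ]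
  simp only [eulerMascheroniSeq, hH2] at hmono
  norm_num at hmono
  linarith [log_three_lt]

lemma exp_neg_harmonic_sub_le {k : ℕ} (hk : 2 ≤ k) :
    exp (-(harmonic k - 1 / 8 : ℝ)) ≤ 1 / (k + 1) := by
  have hinv : (1 : ℝ) / (k + 1) = exp (-log (k + 1)) := by
    rw [exp_neg, exp_log (by positivity), one_div]
  rw [hinv, exp_le_exp]
  linarith [log_add_one_add_one_div_eight_le_harmonic hk]

noncomputable def expStoppingValue (k : ℕ) : ℝ := (fun c => c + exp (-c))^[k] 0

lemma expStoppingValue_zero : expStoppingValue 0 = 0 := rfl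

lemma expStoppingValue_succ (k : ℕ) :
    expStoppingValue (k + 1) = expStoppingValue k + exp (-expStoppingValue k) :=
  Function.iterate_succ_apply' _ _ _

lemma expStoppingValue_nonneg (k : ℕ) : 0 ≤ expStoppingValue k := by
  induction k with
  | zero => exact le_rfl
  | succ k ih => rw [expStoppingValue_succ]; positivity

lemma expStoppingValue_le_harmonic_sub {k : ℕ} (hk : 2 ≤ k) :
    expStoppingValue k ≤ harmonic k - 1 / 8 := by
  induction k, hk using Nat.le_induction with
  | base =>
    have hvalue : expStoppingValue 2 = 1 + exp (-1) := by
      simp [expStoppingValue_succ, expStoppingValue_zero]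
    have hH2 : (harmonic 2 : ℝ) = 3 / 2 := by norm_num [harmonic_succ]
    have hexp : exp (-1) ≤ 3 / 8 := by
      rw [exp_neg, inv_eq_one_div, div_le_iff₀ (exp_pos 1)]
      linarith [exp_one_gt_d9]
    rw [hvalue, hH2]
    linarith
  | succ k hk ih =>
    have hH : (harmonic (k + 1) : ℝ) = harmonic k + 1 / (k + 1) := by
      rw [harmonic_succ]; push_cast; ring
    calc expStoppingValue (k + 1)
        ≤ (harmonic k - 1 / 8) + exp (-(harmonic k - 1 / 8 : ℝ)) := by
          rw [expStoppingValue_succ]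
          exact monotoneOn_add_exp_neg (expStoppingValue_nonneg k)
            ((expStoppingValue_nonneg k).trans ih) ih
      _ ≤ harmonic (k + 1) - 1 / 8 := by linarith [exp_neg_harmonic_sub_le hk]

/-- With `p^(n) = 0` and `p^(i) = E[max{v, p^(i+1)}]` for `v ∼ Exp(1)`, we have
`p^(n-k) ≤ H_k - 1/8` for all `2 ≤ k ≤ n`. -/
theorem stmt10 (n : ℕ) (p : ℕ → ℝ)
    (hpn : p n = 0)
    (hrec : ∀ i < n, p i = ∫ x, max x (p (i + 1)) ∂(expMeasure 1)) :
    ∀ k, 2 ≤ k → k ≤ n → p (n - k) ≤ (harmonic k : ℝ) - 1 / 8 := by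
  have hvalue : ∀ j ≤ n, p (n - j) = expStoppingValue j := by
    intro j hj
    induction j with
    | zero => rw [Nat.sub_zero, hpn, expStoppingValue_zero]
    | succ j ih =>
      rw [hrec _ (by omega), show n - (j + 1) + 1 = n - j by omega, ih (by omega),
        integral_max_expMeasure_one (expStoppingValue_nonneg j), expStoppingValue_succ]
  intro k hk hkn
  rw [hvalue k hkn]
  exact expStoppingValue_le_harmonic_sub hk
end

section
/- For all sufficiently large n (e.g., n ≥ e^{e^{e^4}}) and every p ≥ 0, (p + 1)(1 − (1 − e^{−p})^n) ≤ H_n − c·log log log n for some universal constant c > 0. Consequently, no static-price single-item mechanism with i.i.d. Exp(1) values achieves competitive ratio better than 1 − Ω(log log log n / log n) relative to E[max_i v_i] = H_n. -/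
/-!
Write `a = log n`, `L = log log a` and `T = a - L / 2`; since `log n ≤ H_n` it suffices to bound
the revenue `(p + 1) (1 - (1 - e^{-p})^n)` by `T`. For `p + 1 ≤ T` this is trivial. For
`p ≥ a + 1`, Bernoulli's inequality bounds it by `(p + 1) e^{a - p} ≤ (a + 2) / e ≤ T`. In the
remaining window `T < p + 1 < a + 2` the sale probability is at most `1 - exp (-2 e^{a - p})`
with `e^{a - p} ≤ e √(log a)`, so the price loses at least `(a / 2) exp (-2 e √(log a))` to
unsold items, which beats the gain `p + 1 - T ≤ 2 + L / 2` as soon as `L ≥ 4`.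
-/

open Real

lemma one_sub_one_sub_pow_le_mul {x : ℝ} (hx : x ≤ 2) (n : ℕ) : 1 - (1 - x) ^ n ≤ n * x := by
  have := one_add_mul_le_pow (show -2 ≤ -x by linarith) n
  rw [← sub_eq_add_neg] at this
  linarith

lemma exp_neg_two_mul_le_one_sub {x : ℝ} (hx0 : 0 ≤ x) (hx : x ≤ 1 / 2) :
    exp (-(2 * x)) ≤ 1 - x := by
  have h1 : 1 + 2 * x ≤ exp (2 * x) := by linarith [add_one_le_exp (2 * x)]
  have h2 : exp (-(2 * x)) * exp (2 * x) = 1 := by rw [← exp_add]; simp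
  nlinarith [exp_pos (-(2 * x))]

lemma one_sub_one_sub_pow_le_one_sub_exp {x : ℝ} (hx0 : 0 ≤ x) (hx : x ≤ 1 / 2) (n : ℕ) :
    1 - (1 - x) ^ n ≤ 1 - exp (-(2 * (n * x))) := by
  have : exp (-(2 * (n * x))) = exp (-(2 * x)) ^ n := by
    rw [← exp_nat_mul]; ring_nf
  rw [this]
  gcongr
  exact exp_neg_two_mul_le_one_sub hx0 hx

lemma add_one_mul_exp_sub_le {a p : ℝ} (ha : -1 ≤ a) (hp : a + 1 ≤ p) :
    (p + 1) * exp (a - p) ≤ (a + 2) * exp (-1) := by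
  have hdecay : exp (a - p) ≤ exp (-1) := exp_le_exp.mpr (by linarith)
  have hpeak := mul_exp_neg_le_exp_neg_one (p - a)
  calc (p + 1) * exp (a - p) = (a + 1) * exp (a - p) + (p - a) * exp (-(p - a)) := by ring_nf
    _ ≤ (a + 1) * exp (-1) + exp (-1) := by gcongr; linarith
    _ = (a + 2) * exp (-1) := by ring

lemma log_log_le_sub_two {a : ℝ} (ha : 1 < a) : log (log a) ≤ a - 2 := by
  have h1 := log_le_sub_one_of_pos (log_pos ha)
  have h2 := log_le_sub_one_of_pos (zero_lt_one.trans ha)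
  linarith

lemma four_add_two_mul_log_le_exp {s : ℝ} (hs : exp 2 ≤ s) :
    4 + 2 * log s ≤ exp (s ^ 2 - 2 * exp 1 * s) := by
  have he := exp_one_gt_d9
  have hs0 : 0 < s := (exp_pos 2).trans_le hs
  have he2 : exp 2 = exp 1 ^ 2 := by rw [← exp_nat_mul]; norm_num
  have hlog : log s ≤ s / 2 := by
    have h := log_le_sub_one_of_pos (div_pos hs0 (exp_pos 1))
    rw [log_div hs0.ne' (exp_pos 1).ne', log_exp] at h
    have : s / exp 1 ≤ s / 2 := div_le_div_of_nonneg_left hs0.le two_pos exp_one_gt_two.le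
    linarith
  have hpoly : 3 + s ≤ s ^ 2 - 2 * exp 1 * s := by
    have hgap : 0.9 ≤ s - 2 * exp 1 - 1 := by nlinarith
    nlinarith
  linarith [add_one_le_exp (s ^ 2 - 2 * exp 1 * s)]

lemma mul_one_sub_exp_le_of_mem_window {a p : ℝ} (ha : exp (exp 4) ≤ a)
    (hlow : a - log (log a) / 2 < p + 1) (hhigh : p < a + 1) :
    (p + 1) * (1 - exp (-(2 * exp (a - p)))) ≤ a - log (log a) / 2 := by
  set L := log (log a) with hL
  set s := exp (L / 2) with hs
  have ha1 : 1 < a := by linarith [add_one_le_exp (exp 4), exp_pos 4]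
  have hloga : exp 4 ≤ log a := (le_log_iff_exp_le (by linarith)).mpr ha
  have hloga0 : 0 < log a := (exp_pos 4).trans_le hloga
  have hL4 : 4 ≤ L := (le_log_iff_exp_le hloga0).mpr hloga
  have hs2 : s ^ 2 = log a := by
    rw [hs, ← exp_nat_mul, show ((2 : ℕ) : ℝ) * (L / 2) = L by push_cast; ring, hL,
      exp_log hloga0]
  have hT : a / 2 + 1 ≤ a - L / 2 := by linarith [log_log_le_sub_two ha1]
  have hs_ge : exp 2 ≤ s := exp_le_exp.mpr (by linarith)
  have hlogs : L = 2 * log s := by rw [hs, log_exp]; ring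
  have hwindow : exp (a - p) ≤ exp 1 * s := by
    rw [hs, ← exp_add]; exact exp_le_exp.mpr (by linarith)
  have hloss : 4 + L ≤ a * exp (-(2 * exp 1 * s)) := by
    have ha_eq : a = exp (s ^ 2) := by rw [hs2, exp_log (by linarith)]
    rw [hlogs, ha_eq, ← exp_add, ← sub_eq_add_neg]
    exact four_add_two_mul_log_le_exp hs_ge
  have hunsold : a / 2 * exp (-(2 * exp 1 * s)) ≤ (p + 1) * exp (-(2 * exp (a - p))) :=
    mul_le_mul (by linarith) (exp_le_exp.mpr (by linarith)) (exp_pos _).le (by linarith)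
  linarith

theorem static_revenue_le {n : ℕ} (hn : exp (exp (exp 4)) ≤ n) {p : ℝ} (hp : 0 ≤ p) :
    (p + 1) * (1 - (1 - exp (-p)) ^ n) ≤ log n - log (log (log n)) / 2 := by
  set a := log (n : ℝ) with ha
  have hn0 : (0 : ℝ) < n := (exp_pos _).trans_le hn
  have ha_ge : exp (exp 4) ≤ a := (le_log_iff_exp_le hn0).mpr hn
  have ha2 : 2 ≤ a := by linarith [add_one_le_exp (exp 4), add_one_le_exp 4]
  have hT : a / 2 + 1 ≤ a - log (log a) / 2 := by linarith [log_log_le_sub_two (by linarith : 1 < a)]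
  have hnx : (n : ℝ) * exp (-p) = exp (a - p) := by
    rw [ha, sub_eq_add_neg, exp_add, exp_log hn0]
  have hx1 : exp (-p) ≤ 1 := exp_le_one_iff.mpr (by linarith)
  rcases le_or_gt (p + 1) (a - log (log a) / 2) with hlow | hlow
  · have : 0 ≤ (1 - exp (-p)) ^ n := pow_nonneg (by linarith) n
    nlinarith
  rcases le_or_gt (a + 1) p with hhigh | hhigh
  · calc (p + 1) * (1 - (1 - exp (-p)) ^ n) ≤ (p + 1) * exp (a - p) := by
          rw [← hnx]; gcongr; exact one_sub_one_sub_pow_le_mul (by linarith) n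
      _ ≤ (a + 2) * exp (-1) := add_one_mul_exp_sub_le (by linarith) hhigh
      _ ≤ (a + 2) / 2 := by
          rw [exp_neg, ← div_eq_mul_inv]
          exact div_le_div_of_nonneg_left (by linarith) two_pos exp_one_gt_two.le
      _ ≤ a - log (log a) / 2 := by linarith
  · have hx : exp (-p) ≤ 1 / 2 := by
      rw [exp_neg, one_div]
      exact inv_anti₀ two_pos (by linarith [add_one_le_exp p])
    calc (p + 1) * (1 - (1 - exp (-p)) ^ n) ≤ (p + 1) * (1 - exp (-(2 * exp (a - p)))) := by
          rw [← hnx]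
          exact mul_le_mul_of_nonneg_left
            (one_sub_one_sub_pow_le_one_sub_exp (exp_pos _).le hx n) (by linarith)
      _ ≤ a - log (log a) / 2 := mul_one_sub_exp_le_of_mem_window ha_ge hlow hhigh

/-- There is a universal constant `c > 0` such that for all `n ≥ e^{e^{e^4}}` and all
static prices `p ≥ 0`, `(p+1)(1 - (1 - e^{-p})^n) ≤ H_n - c log log log n`; hence no
static-price mechanism for i.i.d. `Exp(1)` values beats `1 - Ω(log log log n / log n)`
relative to `E[max_i v_i] = H_n`. -/
theorem stmt13 :
    ∃ c : ℝ, 0 < c ∧ ∀ n : ℕ, Real.exp (Real.exp (Real.exp 4)) ≤ (n : ℝ) →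
      ∀ p : ℝ, 0 ≤ p →
        (p + 1) * (1 - (1 - Real.exp (-p)) ^ n)
          ≤ (harmonic n : ℝ) - c * Real.log (Real.log (Real.log n)) := by
  refine ⟨1 / 2, by norm_num, fun n hn p hp => ?_⟩
  have hn0 : (0 : ℝ) < n := (exp_pos _).trans_le hn
  have hlog : log n ≤ harmonic n := by
    have := log_add_one_le_harmonic n
    push_cast at this
    linarith [log_le_log hn0 (lt_add_one (n : ℝ)).le]
  linarith [static_revenue_le hn hp]
end

section
/- Let n ≥ e^{e^{e^4}} and H_n − 1 ≤ p. Assuming the revenue function p ↦ p(1 − (1 − e^{−p})^n) is non-increasing on [H_n − 1, ∞), we have (p + 1)(1 − (1 − e^{−p})^n) ≤ (99/100)·H_n + 1. -/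
open Real

/-!
Put `p₀ = H_n - 1` and `q x = 1 - (1 - e^{-x})^n`. Since `p ≥ p₀`, monotonicity of the revenue
gives `(p + 1) q p ≤ p₀ q p₀ + q p ≤ p₀ q p₀ + 1`, so it suffices to show `q p₀ ≤ 99/100`, i.e.
`(1 - e^{-p₀})^n ≥ 1/100`. As `H_n ≥ log n`, `e^{-p₀} ≤ e/n`, and `(1 - e/n)^n` stays above
`e^{-3} > 1/100` once `n ≥ 100`.
-/

lemma hundred_le_exp_exp_exp_four : (100 : ℝ) ≤ exp (exp (exp 4)) := by
  have h4 : (5 : ℝ) ≤ exp 4 := by linarith [add_one_le_exp (4 : ℝ)]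
  have h5 : (100 : ℝ) ≤ exp 5 := by
    rw [show (5 : ℝ) = (5 : ℕ) * 1 by norm_num, exp_nat_mul]
    calc (100 : ℝ) ≤ 2.7182818283 ^ 5 := by norm_num
      _ ≤ exp 1 ^ 5 := by gcongr; exact exp_one_gt_d9.le
  calc (100 : ℝ) ≤ exp 5 := h5
    _ ≤ exp (exp 4) := exp_le_exp.mpr h4
    _ ≤ exp (exp (exp 4)) := by linarith [add_one_le_exp (exp (exp 4))]

lemma exp_three_le_hundred : exp 3 ≤ 100 := by
  rw [show (3 : ℝ) = (3 : ℕ) * 1 by norm_num, exp_nat_mul]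
  calc exp 1 ^ 3 ≤ 2.7182818286 ^ 3 := by gcongr; exact exp_one_lt_d9.le
    _ ≤ 100 := by norm_num

lemma log_le_harmonic {n : ℕ} (hn : 0 < n) : log n ≤ harmonic n := by
  calc log n ≤ log (n + 1) := log_le_log (by positivity) (by linarith)
    _ ≤ harmonic n := by exact_mod_cast log_add_one_le_harmonic n

lemma exp_neg_harmonic_sub_one_le {n : ℕ} (hn : 0 < n) :
    exp (-(harmonic n - 1)) ≤ exp 1 / n := by
  rw [← exp_log (Nat.cast_pos.mpr hn : (0 : ℝ) < n), ← exp_sub, exp_le_exp]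
  linarith [log_le_harmonic hn]

lemma exp_neg_div_one_sub_le_one_sub {t : ℝ} (ht : t < 1) : exp (-(t / (1 - t))) ≤ 1 - t := by
  have h : 0 < 1 - t := by linarith
  calc exp (-(t / (1 - t))) = exp (1 - (1 - t)⁻¹) := by congr 1; field_simp; ring
    _ ≤ exp (log (1 - t)) := exp_le_exp.mpr (one_sub_inv_le_log_of_pos h)
    _ = 1 - t := exp_log h

lemma exp_neg_mul_div_one_sub_le_one_sub_pow (n : ℕ) {t : ℝ} (ht : t < 1) :
    exp (-(n * (t / (1 - t)))) ≤ (1 - t) ^ n := by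
  rw [neg_mul_eq_mul_neg, exp_nat_mul]
  exact pow_le_pow_left₀ (exp_pos _).le (exp_neg_div_one_sub_le_one_sub ht) n

lemma one_div_hundred_le_one_sub_pow {n : ℕ} {t : ℝ} (hn : (100 : ℝ) ≤ n) (ht : t ≤ exp 1 / n) :
    1 / 100 ≤ (1 - t) ^ n := by
  have hn0 : (0 : ℝ) < n := by linarith
  have he := exp_one_lt_d9
  have hnt : n * t ≤ exp 1 := by rwa [le_div_iff₀' hn0] at ht
  have ht100 : t ≤ exp 1 / 100 :=
    ht.trans (div_le_div_of_nonneg_left (exp_pos 1).le (by norm_num) hn)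
  have hexponent : n * (t / (1 - t)) ≤ 3 := by
    rw [mul_div_assoc', div_le_iff₀ (by linarith)]
    linarith
  calc 1 / 100 ≤ exp (-3) := by
        rw [exp_neg, one_div]; exact inv_anti₀ (exp_pos _) exp_three_le_hundred
    _ ≤ exp (-(n * (t / (1 - t)))) := exp_le_exp.mpr (by linarith)
    _ ≤ (1 - t) ^ n := exp_neg_mul_div_one_sub_le_one_sub_pow n (by linarith)

/-- For `n ≥ e^{e^{e^4}}` and `p ≥ H_n - 1`, assuming the revenue function
`p ↦ p(1 - (1 - e^{-p})^n)` is non-increasing on `[H_n - 1, ∞)`, we have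
`(p+1)(1 - (1 - e^{-p})^n) ≤ (99/100) H_n + 1`. -/
theorem stmt17 (n : ℕ) (hn : Real.exp (Real.exp (Real.exp 4)) ≤ (n : ℝ))
    (p : ℝ) (hp : (harmonic n : ℝ) - 1 ≤ p)
    (hmono : AntitoneOn (fun x : ℝ => x * (1 - (1 - Real.exp (-x)) ^ n))
      (Set.Ici ((harmonic n : ℝ) - 1))) :
    (p + 1) * (1 - (1 - Real.exp (-p)) ^ n) ≤ (99 / 100) * (harmonic n : ℝ) + 1 := by
  set H : ℝ := (harmonic n : ℝ)
  have hn100 : (100 : ℝ) ≤ n := hundred_le_exp_exp_exp_four.trans hn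
  have hnpos : 0 < n := by exact_mod_cast (show (0 : ℝ) < n by linarith)
  have hH : 1 ≤ H := by
    have : 1 ≤ log n := by
      rw [le_log_iff_exp_le (by linarith)]; linarith [exp_one_lt_d9]
    linarith [log_le_harmonic hnpos]
  have hq₀ : 1 / 100 ≤ (1 - exp (-(H - 1))) ^ n :=
    one_div_hundred_le_one_sub_pow hn100 (exp_neg_harmonic_sub_one_le hnpos)
  have hrevenue : p * (1 - (1 - exp (-p)) ^ n) ≤ (H - 1) * (1 - (1 - exp (-(H - 1))) ^ n) :=
    hmono Set.self_mem_Ici hp hp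
  have hqp : 0 ≤ (1 - exp (-p)) ^ n :=
    pow_nonneg (sub_nonneg.mpr (exp_le_one_iff.mpr (by linarith))) n
  nlinarith [mul_nonneg (sub_nonneg.mpr hH) (sub_nonneg.mpr hq₀)]
end

section
/- Let X_1, …, X_n be i.i.d. from a continuous MHR distribution with quantile function F^{-1}, and suppose m ≤ n/(log log n)². With static prices p_j = F_j^{-1}(1 − q), q = (log log n)/n for each of m items (values independent across items, each item j having MHR marginal F_j), the probability that a fixed item j remains unsold after all n unit-demand buyers is at most e/log n. -/
/-!
Call buyer `i` a sure sale of item `j` if `v i j > p j` while `v i k ≤ p k` for every other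
item `k`: such a buyer takes item `j` if it is still available. By independence across items
this has probability `r = q (1 - q)^(m - 1)` for each buyer, and by independence across buyers
item `j` stays unsold with probability at most `(1 - r)^n ≤ exp (-n r)`. Bernoulli's inequality
gives `n r ≥ n q (1 - m q) ≥ L (1 - 1 / L) = L - 1` for `L = log log n`, because `n q = L` and
`m q ≤ 1 / L`; hence `exp (-n r) ≤ e / log n`.
-/

open MeasureTheory Real ProbabilityTheory

namespace ProbabilityTheory

variable {Ω ι κ β : Type*} {mΩ : MeasurableSpace Ω} {μ : Measure Ω} [MeasurableSpace β]
  {X : ι → κ → Ω → β}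

lemma iIndepFun.of_uncurry (h : iIndepFun (fun p : ι × κ => X p.1 p.2) μ)
    (hX : ∀ i k, Measurable (X i k)) :
    iIndepFun (fun i ω k => X i k ω) μ := by
  have := h.isProbabilityMeasure
  have : ∀ i k, IsProbabilityMeasure (μ.map (X i k)) :=
    fun i k => Measure.isProbabilityMeasure_map (hX i k).aemeasurable
  have hjoint : μ.map (fun ω p => X p.1 p.2 ω) =
      Measure.infinitePi (fun p : ι × κ => μ.map (X p.1 p.2)) :=
    h.map_fun_eq_infinitePi_map fun p => hX p.1 p.2
  have hrow (i : ι) :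
      μ.map (fun ω k => X i k ω) = Measure.infinitePi (fun k => μ.map (X i k)) :=
    (h.precomp (Prod.mk_right_injective i)).map_fun_eq_infinitePi_map fun k => hX i k
  rw [iIndepFun_iff_map_fun_eq_infinitePi_map (fun i => by fun_prop)]
  simp_rw [hrow]
  rw [← Measure.infinitePi_map_curry, ← hjoint, Measure.map_map (by fun_prop) (by fun_prop)]
  rfl

lemma iIndepFun.measure_iInter_preimage_of_uncurry [Fintype κ]
    (h : iIndepFun (fun p : ι × κ => X p.1 p.2) μ) (i : ι) {t : κ → Set β}
    (ht : ∀ k, MeasurableSet (t k)) :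
    μ (⋂ k, X i k ⁻¹' t k) = ∏ k, μ (X i k ⁻¹' t k) :=
  (h.precomp (Prod.mk_right_injective i)).meas_iInter fun k => ⟨t k, ht k, rfl⟩

lemma iIndepFun.measure_forall_exists_not_mem [Fintype ι] [Fintype κ]
    (h : iIndepFun (fun p : ι × κ => X p.1 p.2) μ) (hX : ∀ i k, Measurable (X i k))
    {t : κ → Set β} (ht : ∀ k, MeasurableSet (t k)) :
    μ {ω | ∀ i, ∃ k, X i k ω ∉ t k} = ∏ i, (1 - ∏ k, μ (X i k ⁻¹' t k)) := by
  have := h.isProbabilityMeasure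
  have hbox : MeasurableSet (Set.univ.pi t) := MeasurableSet.univ_pi ht
  have hevent : {ω | ∀ i, ∃ k, X i k ω ∉ t k} =
      ⋂ i, (fun ω k => X i k ω) ⁻¹' (Set.univ.pi t)ᶜ := by
    ext ω; simp
  rw [hevent, (h.of_uncurry hX).meas_iInter fun i => ⟨_, hbox.compl, rfl⟩]
  refine Finset.prod_congr rfl fun i _ => ?_
  have hrow : (fun ω k => X i k ω) ⁻¹' Set.univ.pi t = ⋂ k, X i k ⁻¹' t k := by
    ext ω; simp
  rw [Set.preimage_compl, prob_compl_eq_one_sub (hbox.preimage (by fun_prop)), hrow,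
    h.measure_iInter_preimage_of_uncurry i ht]

end ProbabilityTheory

lemma mul_one_sub_pow_le_one {q : ℝ} (hq0 : 0 ≤ q) (hq1 : q ≤ 1) (k : ℕ) :
    q * (1 - q) ^ k ≤ 1 :=
  mul_le_one₀ hq1 (pow_nonneg (by linarith) _) (pow_le_one₀ (by linarith) (by linarith))

section SureSale

variable {κ : Type*} [DecidableEq κ]

def sureSaleBox (p : κ → ℝ) (j : κ) : κ → Set ℝ :=
  Function.update (fun k => Set.Iic (p k)) j (Set.Ioi (p j))

lemma measurableSet_sureSaleBox (p : κ → ℝ) (j k : κ) :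
    MeasurableSet (sureSaleBox p j k) := by
  rcases eq_or_ne k j with rfl | hk
  · simp [sureSaleBox]
  · simp [sureSaleBox, hk]

lemma forall_mem_sureSaleBox_iff {p x : κ → ℝ} {j : κ} :
    (∀ k, x k ∈ sureSaleBox p j k) ↔ p j < x j ∧ ∀ k, k ≠ j → x k ≤ p k := by
  refine ⟨fun h => ⟨by simpa [sureSaleBox] using h j, fun k hk => ?_⟩, fun h k => ?_⟩
  · simpa [sureSaleBox, hk] using h k
  · rcases eq_or_ne k j with rfl | hk
    · simpa [sureSaleBox] using h.1
    · simpa [sureSaleBox, hk] using h.2 k hk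

lemma prod_measure_preimage_sureSaleBox [Fintype κ] {Ω : Type*} [MeasurableSpace Ω]
    {μ : Measure Ω} [IsProbabilityMeasure μ] {X : κ → Ω → ℝ} (hX : ∀ k, Measurable (X k))
    {p : κ → ℝ} {q : ℝ} (hq0 : 0 ≤ q) (hq1 : q ≤ 1)
    (hIic : ∀ k, μ (X k ⁻¹' Set.Iic (p k)) = ENNReal.ofReal (1 - q)) (j : κ) :
    ∏ k, μ (X k ⁻¹' sureSaleBox p j k) =
      ENNReal.ofReal (q * (1 - q) ^ (Fintype.card κ - 1)) := by
  have hIoi : μ (X j ⁻¹' Set.Ioi (p j)) = ENNReal.ofReal q := by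
    rw [← Set.compl_Iic, Set.preimage_compl, prob_compl_eq_one_sub (hX j measurableSet_Iic),
      hIic, ← ENNReal.ofReal_one, ← ENNReal.ofReal_sub _ (by linarith), sub_sub_cancel]
  have hfactor (k : κ) : μ (X k ⁻¹' sureSaleBox p j k) =
      Function.update (fun _ => ENNReal.ofReal (1 - q)) j (ENNReal.ofReal q) k := by
    rcases eq_or_ne k j with rfl | hk
    · simp [sureSaleBox, hIoi]
    · simp [sureSaleBox, hk, hIic]
  rw [Finset.prod_congr rfl fun k _ => hfactor k,
    Finset.prod_update_of_mem (Finset.mem_univ j), Finset.prod_const, Finset.card_sdiff,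
    Finset.card_univ, ENNReal.ofReal_mul hq0, ENNReal.ofReal_pow (by linarith)]
  simp

end SureSale

lemma one_sub_mul_one_sub_pow_pow_le_exp {q : ℝ} (hq0 : 0 ≤ q) (hq1 : q ≤ 1) (n m : ℕ) :
    (1 - q * (1 - q) ^ (m - 1)) ^ n ≤ exp (-(n * q * (1 - m * q))) := by
  have hbernoulli : 1 - m * q ≤ (1 - q) ^ (m - 1) := by
    have hm : ((m - 1 : ℕ) : ℝ) ≤ m := by exact_mod_cast m.sub_le 1
    calc 1 - m * q ≤ 1 + ((m - 1 : ℕ) : ℝ) * (-q) := by nlinarith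
      _ ≤ (1 + -q) ^ (m - 1) := one_add_mul_le_pow (by linarith) _
      _ = (1 - q) ^ (m - 1) := by rw [← sub_eq_add_neg]
  calc (1 - q * (1 - q) ^ (m - 1)) ^ n ≤ exp (-(q * (1 - q) ^ (m - 1))) ^ n :=
        pow_le_pow_left₀ (sub_nonneg.2 (mul_one_sub_pow_le_one hq0 hq1 _))
          (one_sub_le_exp_neg _) n
    _ = exp (-(n * (q * (1 - q) ^ (m - 1)))) := by rw [← exp_nat_mul, mul_neg]
    _ ≤ exp (-(n * q * (1 - m * q))) := by
        refine exp_le_exp.2 (neg_le_neg ?_)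
        rw [mul_assoc]
        exact mul_le_mul_of_nonneg_left (mul_le_mul_of_nonneg_left hbernoulli hq0) n.cast_nonneg

lemma one_le_log_log {x : ℝ} (hx : exp (exp 1) ≤ x) : 1 ≤ log (log x) := by
  have hlog : exp 1 ≤ log x := (le_log_iff_exp_le ((exp_pos _).trans_le hx)).2 hx
  exact (le_log_iff_exp_le ((exp_pos 1).trans_le hlog)).2 hlog

lemma log_log_div_self_mem_Icc {x : ℝ} (hx : exp (exp 1) ≤ x) :
    log (log x) / x ∈ Set.Icc 0 1 := by
  have hx0 : 0 < x := (exp_pos _).trans_le hx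
  have hL := one_le_log_log hx
  refine ⟨div_nonneg (by linarith) hx0.le, (div_le_one hx0).2 ?_⟩
  calc log (log x) ≤ log x := log_le_self (log_nonneg ((one_le_exp (exp_pos 1).le).trans hx))
    _ ≤ x := log_le_self hx0.le

lemma one_sub_sale_prob_pow_le {n m : ℕ} (hn : exp (exp 1) ≤ n)
    (hmn : (m : ℝ) ≤ n / log (log n) ^ 2) {q : ℝ} (hq : q = log (log n) / n) :
    (1 - q * (1 - q) ^ (m - 1)) ^ n ≤ exp 1 / log n := by
  set L := log (log n) with hL
  have hL1 : 1 ≤ L := one_le_log_log hn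
  have hn0 : (0 : ℝ) < n := (exp_pos _).trans_le hn
  have hlog0 : 0 < log n := (exp_pos 1).trans_le ((le_log_iff_exp_le hn0).2 hn)
  have hq01 := hq ▸ log_log_div_self_mem_Icc hn
  have hnq : n * q = L := by rw [hq]; field_simp
  have hmq : m * q ≤ 1 / L := by
    calc m * q ≤ n / L ^ 2 * q := mul_le_mul_of_nonneg_right hmn hq01.1
      _ = 1 / L := by rw [hq]; field_simp
  calc (1 - q * (1 - q) ^ (m - 1)) ^ n ≤ exp (-(n * q * (1 - m * q))) :=
        one_sub_mul_one_sub_pow_pow_le_exp hq01.1 hq01.2 n m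
    _ ≤ exp (1 - L) := by
        refine exp_le_exp.2 ?_
        rw [hnq]
        have : L * (1 / L) = 1 := by field_simp
        nlinarith
    _ = exp 1 / log n := by rw [exp_sub, hL, exp_log hlog0]

theorem stmt18_general {Ω : Type*} [MeasurableSpace Ω] (μ : Measure Ω) [IsProbabilityMeasure μ]
    (n m : ℕ)
    (hn : Real.exp (Real.exp 1) ≤ (n : ℝ))
    (hmn : (m : ℝ) ≤ n / (Real.log (Real.log n)) ^ 2)
    (F Finv : Fin m → ℝ → ℝ)
    (hquant : ∀ j, ∀ y ∈ Set.Icc (0:ℝ) 1, F j (Finv j y) = y)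
    (v : Fin n → Fin m → Ω → ℝ)
    (hmeas : ∀ i j, Measurable (v i j))
    (hCDF : ∀ i j, ∀ t : ℝ, μ {ω | v i j ω ≤ t} = ENNReal.ofReal (F j t))
    (hindep : iIndepFun
      (fun (ij : Fin n × Fin m) ω => v ij.1 ij.2 ω) μ)
    (q : ℝ) (hq : q = Real.log (Real.log n) / n)
    (price : Fin m → ℝ) (hprice : ∀ j, price j = Finv j (1 - q))
    (j : Fin m)
    (sold : Set Ω)
    (hsold : ∀ ω, (∃ i : Fin n, price j < v i j ω ∧
      ∀ j' : Fin m, j' ≠ j → v i j' ω ≤ price j') → ω ∈ sold) :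
    μ soldᶜ ≤ ENNReal.ofReal (Real.exp 1 / Real.log n) := by
  obtain ⟨hq0, hq1⟩ := hq ▸ log_log_div_self_mem_Icc hn
  set r := q * (1 - q) ^ (m - 1)
  have hIic (i : Fin n) (k : Fin m) :
      μ (v i k ⁻¹' Set.Iic (price k)) = ENNReal.ofReal (1 - q) := by
    rw [← hquant k (1 - q) ⟨by linarith, by linarith⟩, ← hprice, ← hCDF i k]
    rfl
  have hunsold : soldᶜ ⊆ {ω | ∀ i, ∃ k, v i k ω ∉ sureSaleBox price j k} := fun ω hω i => by
    by_contra! hin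
    exact hω (hsold ω ⟨i, forall_mem_sureSaleBox_iff.1 hin⟩)
  calc μ soldᶜ ≤ μ {ω | ∀ i, ∃ k, v i k ω ∉ sureSaleBox price j k} := measure_mono hunsold
    _ = ∏ _i : Fin n, (1 - ENNReal.ofReal r) := by
        rw [hindep.measure_forall_exists_not_mem hmeas (measurableSet_sureSaleBox price j)]
        simp only [prod_measure_preimage_sureSaleBox (hmeas _) hq0 hq1 (hIic _), Fintype.card_fin,
          r]
    _ = ENNReal.ofReal ((1 - r) ^ n) := by
        rw [Finset.prod_const, Finset.card_univ, Fintype.card_fin, ← ENNReal.ofReal_one,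
          ← ENNReal.ofReal_sub _ (by positivity),
          ENNReal.ofReal_pow (sub_nonneg.2 (mul_one_sub_pow_le_one hq0 hq1 _))]
    _ ≤ ENNReal.ofReal (exp 1 / log n) :=
        ENNReal.ofReal_le_ofReal (one_sub_sale_prob_pow_le hn hmn hq)

/-- Static pricing with independent item valuations: with `m ≤ n/(log log n)²` items,
MHR marginals `F j`, prices `p j = F_j⁻¹(1 - q)` for `q = log log n / n`, any fixed item
`j` remains unsold after all `n` unit-demand buyers with probability at most `e / log n`.
The event `sold` (item `j` is sold) contains, for each buyer `i`, the event that buyer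
`i`'s value for `j` exceeds its price while all other values are below their prices
(in which case the unit-demand buyer certainly buys item `j` if it is still available). -/
theorem stmt18 {Ω : Type*} [MeasurableSpace Ω] (μ : Measure Ω) [IsProbabilityMeasure μ]
    (n m : ℕ) (hm : 0 < m)
    (hn : Real.exp (Real.exp 1) ≤ (n : ℝ))
    (hmn : (m : ℝ) ≤ n / (Real.log (Real.log n)) ^ 2)
    (F Finv : Fin m → ℝ → ℝ)
    (hFcont : ∀ j, Continuous (F j))
    (hquant : ∀ j, ∀ y ∈ Set.Icc (0:ℝ) 1, F j (Finv j y) = y)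
    (hMHR : ∀ j, ConcaveOn ℝ {x : ℝ | F j x < 1} (fun x => Real.log (1 - F j x)))
    (v : Fin n → Fin m → Ω → ℝ)
    (hmeas : ∀ i j, Measurable (v i j))
    (hCDF : ∀ i j, ∀ t : ℝ, μ {ω | v i j ω ≤ t} = ENNReal.ofReal (F j t))
    (hindep : iIndepFun
      (fun (ij : Fin n × Fin m) ω => v ij.1 ij.2 ω) μ)
    (q : ℝ) (hq : q = Real.log (Real.log n) / n)
    (price : Fin m → ℝ) (hprice : ∀ j, price j = Finv j (1 - q))
    (j : Fin m)
    (sold : Set Ω) (hsold_meas : MeasurableSet sold)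
    (hsold : ∀ ω, (∃ i : Fin n, price j < v i j ω ∧
      ∀ j' : Fin m, j' ≠ j → v i j' ω ≤ price j') → ω ∈ sold) :
    μ soldᶜ ≤ ENNReal.ofReal (Real.exp 1 / Real.log n) :=
  stmt18_general μ n m hn hmn F Finv hquant v hmeas hCDF hindep q hq price hprice j sold hsold
end
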